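/- arXiv:2303.09197 — 6 statements merged into one kernel-verified Lean document; each statement's English description precedes it below -/
import Mathlib

section
/- In a finite abstract argumentation framework (A,R) whose attack relation R is acyclic, there exists a unique function acc : A → Bool such that for every argument x, acc(x) = true if and only if every attacker y of x satisfies acc(y) = false. -/
/-- In a finite abstract argumentation framework (A,R) with acyclic attack relation R,
there exists a unique function `acc : A → Bool` such that for every argument `x`,
`acc x = true` iff every attacker `y` of `x` satisfies `acc y = false`. -/
theorem unique_acceptability_labelling
    {A : Type*} [Fintype A] (R : A → A → Prop)
    (hacyc : ∀ x : A, ¬ Relation.TransGen R x x) :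
    ∃! acc : A → Bool, ∀ x : A, acc x = true ↔ ∀ y : A, R y x → acc y = false := by
  classical
  have htrans : IsTrans A (Relation.TransGen R) := ⟨fun _ _ _ => Relation.TransGen.trans⟩
  have hirr : IsIrrefl A (Relation.TransGen R) := ⟨hacyc⟩
  have hwfT : WellFounded (Relation.TransGen R) :=
    Finite.wellFounded_of_trans_of_irrefl (Relation.TransGen R)
  have hwf : WellFounded R :=
    Subrelation.wf (fun h => Relation.TransGen.single h) hwfT
  set F : ∀ x : A, (∀ y : A, R y x → Bool) → Bool :=
    fun x ih => decide (∀ y : A, ∀ h : R y x, ih y h = false) with hF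
  set acc : A → Bool := hwf.fix F with hacc
  have heq : ∀ x : A, acc x = decide (∀ y : A, R y x → acc y = false) := by
    intro x
    rw [hacc, WellFounded.fix_eq]
  have hsat : ∀ x : A, acc x = true ↔ ∀ y : A, R y x → acc y = false := by
    intro x
    rw [heq x]
    exact decide_eq_true_iff
  refine ⟨acc, hsat, ?_⟩
  intro g hg
  funext x
  induction x using hwf.induction with
  | _ x ih =>
    have : (g x = true) ↔ (acc x = true) := by
      rw [hg x, hsat x]
      constructor
      · intro h y hy; rw [← ih y hy]; exact h y hy
      · intro h y hy; rw [ih y hy]; exact h y hy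
    exact Bool.eq_iff_iff.mpr this
end

section
/- In a finite acyclic abstract argumentation framework, the set S of accepted arguments under the unique acceptability labelling is admissible: it is conflict-free and every element of S is acceptable by S, i.e., for every x ∈ S and every attacker y of x, there exists z ∈ S attacking y. -/
/-- In a finite acyclic AAF, the set S of accepted arguments under the unique
acceptability labelling is admissible: conflict-free, and every attacker of an
element of S is attacked by some element of S. -/
theorem accepted_set_admissible
    {A : Type*} [Fintype A] (R : A → A → Prop)
    (hacyc : ∀ x : A, ¬ Relation.TransGen R x x)
    (acc : A → Bool)
    (hacc : ∀ x : A, acc x = true ↔ ∀ y : A, R y x → acc y = false) :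
    (∀ x y : A, acc x = true → acc y = true → ¬ R x y) ∧
    (∀ x : A, acc x = true → ∀ y : A, R y x → ∃ z : A, acc z = true ∧ R z y) := by
  constructor
  · intro x y hx hy hR
    have := (hacc y).mp hy x hR
    simp [hx] at this
  · intro x hx y hRyx
    have hyf : acc y = false := (hacc x).mp hx y hRyx
    have : ¬ (∀ z : A, R z y → acc z = false) := by
      intro h
      have := (hacc y).mpr h
      simp [this] at hyf
    push_neg at this
    obtain ⟨z, hz, hz2⟩ := this
    exact ⟨z, by simpa using hz2, hz⟩
end

section
/- Given a state S over a set of fluents describing an argumentation graph (with fluents p_x for presence, a_x for acceptability, and cA_{y,x} for possible attacks) such that in S, a_y implies p_y for all y, the following are equivalent: (1) no update event is triggered in S, i.e., for all x,y it is not the case that (a_x ∧ a_y ∧ cA_{y,x}) holds and it is not the case that (p_x ∧ ¬a_x ∧ ⋀_y (¬a_y ∨ ¬cA_{y,x})) holds; (2) S is an argumentative state, i.e., (i) for all x,y, if S ⊨ a_x ∧ p_y ∧ cA_{y,x} then S ⊨ ¬a_y, and (ii) for all x, if S ⊨ p_x ∧ ⋀_y (¬a_y ∨ ¬cA_{y,x})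 then S ⊨ a_x. -/
/-- Lemma 2 (equivalence of "no update event triggered" and "argumentative state").
A state is modelled by predicates `p`, `a`, `cA` over a finite set of arguments;
assuming `a y → p y` for all `y`, no trigger of `makesUnacc` or `makesAcc` holds
iff the state is argumentative. -/
theorem no_trigger_iff_argumentative
    {A : Type*} [Fintype A]
    (p a : A → Prop) (cA : A → A → Prop)
    (hap : ∀ y : A, a y → p y) :
    ((∀ x y : A, ¬ (a x ∧ a y ∧ cA y x)) ∧
      (∀ x : A, ¬ (p x ∧ ¬ a x ∧ ∀ y : A, ¬ a y ∨ ¬ cA y x)))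
    ↔
    ((∀ x y : A, (a x ∧ p y ∧ cA y x) → ¬ a y) ∧
      (∀ x : A, (p x ∧ ∀ y : A, ¬ a y ∨ ¬ cA y x) → a x)) := by
  constructor
  · rintro ⟨h1, h2⟩
    refine ⟨fun x y ⟨hax, _, hc⟩ hay => h1 x y ⟨hax, hay, hc⟩, fun x ⟨hpx, hall⟩ => ?_⟩
    by_contra hax
    exact h2 x ⟨hpx, hax, hall⟩
  · rintro ⟨h1, h2⟩
    refine ⟨fun x y ⟨hax, hay, hc⟩ => h1 x y ⟨hax, hap y hay, hc⟩ hay,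
      fun x ⟨hpx, hax, hall⟩ => hax (h2 x ⟨hpx, hall⟩)⟩
end

section
/- Let S be an argumentative state over a finite set A in which the relation {(y,x) | cA_{y,x} holds in S} is acyclic, and assume a_y → p_y for all y and that no update event is triggered in S. Let AF' = (A', R') be the associated graph, with A' = {x | S ⊨ p_x} and R' = {(y,x) | S ⊨ cA_{y,x}} restricted to A'. Then for every x ∈ A': x is acceptable in AF' (i.e., acc(x) = true under the unique acceptability labelling of the acyclic framework AF') if and only if S ⊨ a_x. -/
/-- Proposition 3: in an argumentative state with acyclic possible-attack relation,
an argument of the associated graph is acceptable (under the unique acceptability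
labelling of the associated acyclic framework) iff its acceptability fluent holds. -/
theorem associated_graph_acceptability
    {A : Type*} [Fintype A]
    (p a : A → Prop) (cA : A → A → Prop)
    (hacyc : ∀ x : A, ¬ Relation.TransGen cA x x)
    (hi : ∀ x y : A, (a x ∧ p y ∧ cA y x) → ¬ a y)
    (hii : ∀ x : A, (p x ∧ ∀ y : A, ¬ a y ∨ ¬ cA y x) → a x)
    (hap : ∀ y : A, a y → p y)
    (hnt1 : ∀ x y : A, ¬ (a x ∧ a y ∧ cA y x))
    (hnt2 : ∀ x : A, ¬ (p x ∧ ¬ a x ∧ ∀ y : A, ¬ a y ∨ ¬ cA y x))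
    (acc : {x : A // p x} → Bool)
    (hacc : ∀ x : {x : A // p x},
      acc x = true ↔ ∀ y : {x : A // p x}, cA y.val x.val → acc y = false) :
    ∀ x : {x : A // p x}, acc x = true ↔ a x.val := by
  haveI : IsTrans A (Relation.TransGen cA) := ⟨fun _ _ _ h1 h2 => h1.trans h2⟩
  haveI : IsIrrefl A (Relation.TransGen cA) := ⟨hacyc⟩
  have hwf : WellFounded (Relation.TransGen cA) :=
    Finite.wellFounded_of_trans_of_irrefl _
  have hwf' : WellFounded (fun y x : {x : A // p x} => cA y.val x.val) :=
    Subrelation.wf (fun h => Relation.TransGen.single h)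
      (InvImage.wf (fun x : {x : A // p x} => x.val) hwf)
  intro x
  induction x using hwf'.induction with
  | _ x ih =>
    have ih' : ∀ y : {x : A // p x}, cA y.val x.val → (acc y = false ↔ ¬ a y.val) := by
      intro y hc
      rw [← ih y hc, Bool.not_eq_true]
    rw [hacc x]
    constructor
    · intro h
      apply hii
      refine ⟨x.property, fun y => ?_⟩
      by_cases hc : cA y x.val
      · by_cases hay : a y
        · exact Or.inl ((ih' ⟨y, hap y hay⟩ hc).mp (h ⟨y, hap y hay⟩ hc))
        · exact Or.inl hay
      · exact Or.inr hc
    · intro hax y hcy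
      exact (ih' y hcy).mpr (hi x.val y.val ⟨hax, y.property, hcy⟩)
end

section
/- Let (A,R) be a finite acyclic abstract argumentation framework, and let S and S' be two argumentative states over A with the same attack fluents cA_{y,x} = ((y,x) ∈ R), in both of which every argument is present (p_x holds for all x ∈ A), no update event is triggered, and a_y → p_y holds. Then S and S' assign the same value to every acceptability fluent: for all x ∈ A, S ⊨ a_x iff S' ⊨ a_x. -/
/-- Uniqueness of the final argumentative state: two argumentative states over the
same acyclic attack relation, in which every argument is present, no update event
is triggered, and `a → p`, assign the same value to every acceptability fluent. -/
theorem final_argumentative_state_unique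
    {A : Type*} [Fintype A] (R : A → A → Prop)
    (hacyc : ∀ x : A, ¬ Relation.TransGen R x x)
    (p a : A → Prop) (p' a' : A → Prop)
    (hp : ∀ x : A, p x) (hp' : ∀ x : A, p' x)
    -- S is an argumentative state with no trigger and a → p
    (hi : ∀ x y : A, (a x ∧ p y ∧ R y x) → ¬ a y)
    (hii : ∀ x : A, (p x ∧ ∀ y : A, ¬ a y ∨ ¬ R y x) → a x)
    (hap : ∀ y : A, a y → p y)
    (hnt1 : ∀ x y : A, ¬ (a x ∧ a y ∧ R y x))
    (hnt2 : ∀ x : A, ¬ (p x ∧ ¬ a x ∧ ∀ y : A, ¬ a y ∨ ¬ R y x))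
    -- S' is an argumentative state with no trigger and a' → p'
    (hi' : ∀ x y : A, (a' x ∧ p' y ∧ R y x) → ¬ a' y)
    (hii' : ∀ x : A, (p' x ∧ ∀ y : A, ¬ a' y ∨ ¬ R y x) → a' x)
    (hap' : ∀ y : A, a' y → p' y)
    (hnt1' : ∀ x y : A, ¬ (a' x ∧ a' y ∧ R y x))
    (hnt2' : ∀ x : A, ¬ (p' x ∧ ¬ a' x ∧ ∀ y : A, ¬ a' y ∨ ¬ R y x)) :
    ∀ x : A, a x ↔ a' x := by

  have hwf : WellFounded (Relation.TransGen R) := by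
    have : IsIrrefl A (Relation.TransGen R) := ⟨hacyc⟩
    have : IsTrans A (Relation.TransGen R) := ⟨fun _ _ _ => Relation.TransGen.trans⟩
    exact Finite.wellFounded_of_trans_of_irrefl _
  intro x
  induction x using hwf.induction with
  | _ x ih =>
    have key : ∀ (q b : A → Prop), (∀ x y : A, ¬ (b x ∧ b y ∧ R y x)) →
        (∀ x : A, ¬ (q x ∧ ¬ b x ∧ ∀ y : A, ¬ b y ∨ ¬ R y x)) → (∀ z, q z) →
        (b x ↔ ∀ y, R y x → ¬ b y) := by
      intro q b h1 h2 hpz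
      constructor
      · intro hbx y hyx hby
        exact h1 x y ⟨hbx, hby, hyx⟩
      · intro h
        by_contra hbx
        exact h2 x ⟨hpz x, hbx, fun y => by
          by_cases hr : R y x
          · exact Or.inl (h y hr)
          · exact Or.inr hr⟩
    rw [key p a hnt1 hnt2 hp, key p' a' hnt1' hnt2' hp']
    constructor
    · intro h y hyx
      rw [← ih y (Relation.TransGen.single hyx)]
      exact h y hyx
    · intro h y hyx
      rw [ih y (Relation.TransGen.single hyx)]
      exact h y hyx
end

section
/- Consider the update dynamics on states over a finite acyclic argumentation framework: from a state S (assigning Booleans to a_x for x in a fixed present set P ⊆ A, with attack relation R acyclic), a step either sets a_x to false when there exist x,y ∈ P with a_x, a_y true and (y,x) ∈ R, or sets a_x to true when x ∈ P, a_x is false, and every attacker y ∈ P of x has a_y false. Then every sequence of such update steps from any initial state terminates in finitely many steps in a state where no step is applicable; equivalently, there is no infinite sequence of applicable update steps. (Hint: each terminal state is the restriction of the unique acceptability labelling and the dynamics has a well-founded measure derived from the acyclic attack order.) -/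
/-!
Every step flips one argument, so some argument changes value infinitely often; take such an
`x` minimal for the attack relation, which is well-founded since it is acyclic on a finite set.
Its attackers are then eventually constant. If some present attacker is eventually accepted,
`makesAcc_x` is eventually disabled, so from then on `x` can only switch to `false`; otherwise
`makesUnacc_{y,x}` is eventually disabled and `x` can only switch to `true`. Either way `x`
changes only finitely often, a contradiction.
-/

/-- An update step of the acceptability-update dynamics on states `A → Bool`,
over present set `P` and acyclic attack relation `R`.  Either `makesUnacc_{y,x}`
(set `a_x := false` when `a_x`, `a_y` hold and `(y,x) ∈ R`, with the priority
that the attacker `y` must not itself be the target of an applicable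
`makesUnacc`), or `makesAcc_x` (set `a_x := true` when `a_x` is false and all
present attackers of `x` are labelled false). -/
def UpdateStep {A : Type*} [DecidableEq A] (P : A → Prop) (R : A → A → Prop)
    (s s' : A → Bool) : Prop :=
  (∃ x y : A, P x ∧ P y ∧ s x = true ∧ s y = true ∧ R y x ∧
      (∀ z : A, P z → R z y → s z = false) ∧
      s' = Function.update s x false) ∨
  (∃ x : A, P x ∧ s x = false ∧ (∀ y : A, P y → R y x → s y = false) ∧
      s' = Function.update s x true)

open Filter Relation

theorem wellFounded_of_forall_not_transGen_self {α : Type*} [Finite α] {r : α → α → Prop}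
    (h : ∀ a, ¬ TransGen r a a) : WellFounded r :=
  have : IsTrans α (TransGen r) := ⟨fun _ _ _ => TransGen.trans⟩
  have : Std.Irrefl (TransGen r) := ⟨h⟩
  Subrelation.wf TransGen.single (Finite.wellFounded_of_trans_of_irrefl _)

namespace Filter.EventuallyConst

variable {α : Type*} [PartialOrder α] {g : ℕ → α}

theorem of_eventually_le_succ [WellFoundedGT α] (h : ∀ᶠ n in atTop, g n ≤ g (n + 1)) :
    EventuallyConst g atTop := by
  obtain ⟨N, hN⟩ := eventually_atTop.1 h
  let tail : ℕ →o α :=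
    ⟨fun k => g (N + k), monotone_nat_of_le_succ fun k => hN (N + k) (Nat.le_add_right N k)⟩
  obtain ⟨n, hn⟩ := WellFoundedGT.monotone_chain_condition tail
  refine eventuallyConst_atTop.2 ⟨N + n, fun j hj => ?_⟩
  have hj' : j = N + (j - N) := by omega
  rw [hj']
  exact (hn (j - N) (by omega)).symm

theorem of_eventually_succ_le [WellFoundedLT α] (h : ∀ᶠ n in atTop, g (n + 1) ≤ g n) :
    EventuallyConst g atTop :=
  of_eventually_le_succ (α := αᵒᵈ) h

end Filter.EventuallyConst

theorem exists_not_eventuallyConst_apply {ι β : Type*} [Finite ι] {f : ℕ → ι → β}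
    (h : ∀ n, ∃ i, f (n + 1) i ≠ f n i) : ∃ i, ¬ EventuallyConst (fun n => f n i) atTop := by
  by_contra! hconst
  have hstable : ∀ᶠ n in atTop, ∀ i, f (n + 1) i = f n i :=
    eventually_all.2 fun i => eventually_atTop.2 (eventuallyConst_atTop_nat.1 (hconst i))
  obtain ⟨n, hn⟩ := hstable.exists
  obtain ⟨i, hi⟩ := h n
  exact hi (hn i)

namespace UpdateStep

variable {A : Type*} [DecidableEq A] {P : A → Prop} {R : A → A → Prop} {s s' : A → Bool}

theorem exists_apply_ne (h : UpdateStep P R s s') : ∃ x, s' x ≠ s x := by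
  rcases h with ⟨x, -, -, -, hx, -, -, -, rfl⟩ | ⟨x, -, hx, -, rfl⟩ <;> exact ⟨x, by simp [hx]⟩

theorem apply_le_of_attacker_true (h : UpdateStep P R s s') {x y : A} (hPy : P y) (hyx : R y x)
    (hy : s y = true) : s' x ≤ s x := by
  rcases h with ⟨z, -, -, -, -, -, -, -, rfl⟩ | ⟨z, -, hz, hguard, rfl⟩
  · rcases eq_or_ne x z with rfl | hne <;> simp [*]
  · rcases eq_or_ne x z with rfl | hne
    · simp [hguard y hPy hyx] at hy
    · simp [hne]

theorem le_apply_of_forall_attacker_false (h : UpdateStep P R s s') {x : A}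
    (hatt : ∀ y, P y → R y x → s y = false) : s x ≤ s' x := by
  rcases h with ⟨z, y, -, hPy, -, hy, hyz, -, rfl⟩ | ⟨z, -, -, -, rfl⟩
  · rcases eq_or_ne x z with rfl | hne
    · simp [hatt y hPy hyz] at hy
    · simp [hne]
  · rcases eq_or_ne x z with rfl | hne <;> simp [*]

end UpdateStep

/-- Termination of the update dynamics: over a finite set with an acyclic attack
relation, there is no infinite sequence of applicable update steps. -/
theorem update_dynamics_terminates
    {A : Type*} [Fintype A] [DecidableEq A]
    (P : A → Prop) (R : A → A → Prop)
    (hacyc : ∀ x : A, ¬ Relation.TransGen R x x) :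
    ¬ ∃ f : ℕ → (A → Bool), ∀ n : ℕ, UpdateStep P R (f n) (f (n + 1)) := by
  rintro ⟨f, hf⟩
  obtain ⟨x, hx, hmin⟩ := (wellFounded_of_forall_not_transGen_self hacyc).has_min
    {x | ¬ EventuallyConst (f · x) atTop}
    (exists_not_eventuallyConst_apply fun n => (hf n).exists_apply_ne)
  have hatt : ∀ y, R y x → EventuallyConst (f · y) atTop := fun y hyx => not_not.1 (hmin y · hyx)
  by_cases hacc : ∃ y, P y ∧ R y x ∧ ∀ᶠ n in atTop, f n y = true
  · obtain ⟨y, hPy, hyx, hy⟩ := hacc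
    exact hx (.of_eventually_succ_le (hy.mono fun n => (hf n).apply_le_of_attacker_true hPy hyx))
  · have hrej : ∀ᶠ n in atTop, ∀ y, P y → R y x → f n y = false := by
      refine eventually_all.2 fun y => ?_
      simp only [eventually_imp_distrib_left]
      intro hPy hyx
      obtain ⟨c, hc⟩ := (hatt y hyx).eventuallyEq_const
      cases c
      · exact hc
      · exact absurd hc fun hc => hacc ⟨y, hPy, hyx, hc⟩
    exact hx (.of_eventually_le_succ (hrej.mono fun n => (hf n).le_apply_of_forall_attacker_false))
end
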